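/- Let K be a compact convex subset of a locally convex real topological vector space. The map k ↦ δ_k (point evaluation) is an affine homeomorphism from K onto the state space S = {Λ ∈ A(K)* : ‖Λ‖ ≤ 1, Λ(1) = 1} equipped with the weak* topology. -/

import Mathlib

/-!
Evaluation `k ↦ δ_k` is weak*-continuous and affine, and it is injective because continuous
linear functionals on `E` restrict to elements of `A(K)` and separate points. A continuous
injection of the compact space `K` into the Hausdorff weak* dual is a homeomorphism onto its
image, so it remains to identify that image with the state space. The image is compact and
convex; a state outside it would be separated from it by a weak*-continuous functional, which
is evaluation at some `a ∈ A(K)`. But a state `Λ` satisfies `Λ a ≤ sup a`, as one sees by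
applying `‖Λ‖ ≤ 1` to `a` minus a suitable constant.
-/

open NormedSpace ContinuousMap

/-- A continuous function on `K` is affine if it preserves convex combinations. -/
def IsAffineOn {E : Type*} [AddCommGroup E] [Module ℝ E] [TopologicalSpace E]
    (K : Set E) (a : C(K, ℝ)) : Prop :=
  ∀ (x y : K) (t : ℝ), 0 ≤ t → t ≤ 1 →
    ∀ h : t • (x : E) + (1 - t) • (y : E) ∈ K,
      a ⟨t • (x : E) + (1 - t) • (y : E), h⟩ = t * a x + (1 - t) * a y

/-- `A(K)`, the affine continuous real functions on `K`, as a subspace of `C(K, ℝ)`. -/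
def affineFns {E : Type*} [AddCommGroup E] [Module ℝ E] [TopologicalSpace E]
    (K : Set E) : Submodule ℝ C(K, ℝ) where
  carrier := {a | IsAffineOn K a}
  add_mem' := by
    intro a b ha hb x y t ht ht' h
    simp only [ContinuousMap.add_apply, ha x y t ht ht' h, hb x y t ht ht' h]; ring
  zero_mem' := by intro x y t ht ht' h; simp
  smul_mem' := by
    intro c a ha x y t ht ht' h
    simp only [ContinuousMap.smul_apply, ha x y t ht ht' h, smul_eq_mul]; ring

theorem one_mem_affineFns {E : Type*} [AddCommGroup E] [Module ℝ E] [TopologicalSpace E]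
    (K : Set E) : (1 : C(K, ℝ)) ∈ affineFns K := by
  intro x y t ht ht' h
  simp only [ContinuousMap.one_apply]; ring


/-- Evaluation at a point of `K`, as a continuous linear functional on `A(K)`. -/
noncomputable def evalA {E : Type*} [AddCommGroup E] [Module ℝ E] [TopologicalSpace E]
    (K : Set E) [CompactSpace K] (k : K) : StrongDual ℝ (affineFns K) :=
  LinearMap.mkContinuous
    { toFun := fun a => (a : C(K, ℝ)) k
      map_add' := fun _ _ => rfl
      map_smul' := fun _ _ => rfl }
    1 (fun a => by simpa using (a : C(K, ℝ)).norm_coe_le_norm k)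

instance WeakDual.instLocallyConvexSpace {F : Type*} [AddCommGroup F] [TopologicalSpace F]
    [Module ℝ F] : LocallyConvexSpace ℝ (WeakDual ℝ F) :=
  inferInstanceAs (LocallyConvexSpace ℝ (WeakBilin (topDualPairing ℝ F)))

theorem WeakDual.exists_eq_apply {𝕜 F : Type*} [NontriviallyNormedField 𝕜] [AddCommGroup F]
    [TopologicalSpace F] [Module 𝕜 F] (f : StrongDual 𝕜 (WeakDual 𝕜 F)) :
    ∃ a : F, ∀ Λ : WeakDual 𝕜 F, f Λ = Λ a := by
  obtain ⟨a, rfl⟩ := LinearMap.dualEmbedding_surjective (topDualPairing 𝕜 F) f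
  exact ⟨a, fun _ => rfl⟩

section State

variable {X : Type*} [TopologicalSpace X] {V : Submodule ℝ C(X, ℝ)} {Λ : StrongDual ℝ V}

theorem nonempty_of_apply_one_ne_zero (h1 : (1 : C(X, ℝ)) ∈ V) (hΛ1 : Λ ⟨1, h1⟩ ≠ 0) :
    Nonempty X := by
  by_contra hX
  rw [not_nonempty_iff] at hX
  apply hΛ1
  rw [show (⟨1, h1⟩ : V) = 0 from Subtype.ext (ContinuousMap.ext isEmptyElim), map_zero]

/-- Compare `a` with the constant halfway between `M` and `-‖a‖`. -/
theorem apply_le_of_forall_le [CompactSpace X] (h1 : (1 : C(X, ℝ)) ∈ V)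
    (hΛ : ∀ b, Λ b ≤ ‖b‖) (hΛ1 : Λ ⟨1, h1⟩ = 1) {a : V} {M : ℝ}
    (ha : ∀ x, (a : C(X, ℝ)) x ≤ M) : Λ a ≤ M := by
  obtain ⟨x₀⟩ := nonempty_of_apply_one_ne_zero h1 (hΛ1 ▸ one_ne_zero)
  have ha_ge : ∀ x, -‖a‖ ≤ (a : C(X, ℝ)) x := fun x =>
    neg_le_of_abs_le ((a : C(X, ℝ)).norm_coe_le_norm x)
  set c := (M - ‖a‖) / 2 with hc
  set r := (M + ‖a‖) / 2 with hr_def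
  have hr : 0 ≤ r := by linarith [ha x₀, ha_ge x₀, hr_def]
  have hdist : ‖a - c • (⟨1, h1⟩ : V)‖ ≤ r := by
    change ‖(a : C(X, ℝ)) - c • 1‖ ≤ r
    refine (ContinuousMap.norm_le _ hr).2 fun x => ?_
    rw [ContinuousMap.sub_apply, ContinuousMap.smul_apply, ContinuousMap.one_apply, smul_eq_mul,
      mul_one, Real.norm_eq_abs, abs_le]
    constructor <;> linarith [ha x, ha_ge x, hc, hr_def]
  calc Λ a = c + Λ (a - c • ⟨1, h1⟩) := by rw [map_sub, map_smul, hΛ1, smul_eq_mul]; ring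
    _ ≤ c + r := by linarith [hΛ (a - c • ⟨1, h1⟩)]
    _ = M := by ring

end State

section Evaluation

variable {E : Type*} [AddCommGroup E] [Module ℝ E] [TopologicalSpace E] (K : Set E)
  [CompactSpace K]

/-- The operator norm is named explicitly: instance search does not find it on the dual of a
submodule of `C(K, ℝ)`. -/
def stateSpace : Set (StrongDual ℝ (affineFns K)) :=
  {Λ | @Norm.norm _ (@ContinuousLinearMap.hasOpNorm ℝ ℝ (affineFns K) ℝ _ _ _ _ _ _
      (RingHom.id ℝ)) Λ ≤ 1 ∧ Λ ⟨(1 : C(K, ℝ)), one_mem_affineFns K⟩ = 1}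

variable {K} in
theorem apply_le_norm_of_mem_stateSpace {Λ : StrongDual ℝ (affineFns K)}
    (hΛ : Λ ∈ stateSpace K) (b : affineFns K) : Λ b ≤ ‖b‖ :=
  calc Λ b ≤ |Λ b| := le_abs_self _
    _ ≤ @Norm.norm _ (@ContinuousLinearMap.hasOpNorm ℝ ℝ (affineFns K) ℝ _ _ _ _ _ _
        (RingHom.id ℝ)) Λ * ‖b‖ :=
      @ContinuousLinearMap.le_opNorm ℝ ℝ (affineFns K) ℝ _ _ _ _ _ _ (RingHom.id ℝ) _ Λ b
    _ ≤ ‖b‖ := mul_le_of_le_one_left (norm_nonneg b) hΛ.1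

theorem evalA_mem_stateSpace (k : K) : evalA K k ∈ stateSpace K :=
  ⟨LinearMap.mkContinuous_norm_le _ zero_le_one _, rfl⟩

theorem continuous_toWeakDual_evalA :
    Continuous fun k : K => StrongDual.toWeakDual (evalA K k) :=
  WeakDual.continuous_of_continuous_eval fun a => (a : C(K, ℝ)).continuous

theorem toWeakDual_evalA_convexComb (x y : K) {t : ℝ} (ht₀ : 0 ≤ t) (ht₁ : t ≤ 1)
    (h : t • (x : E) + (1 - t) • (y : E) ∈ K) :
    StrongDual.toWeakDual (evalA K ⟨t • (x : E) + (1 - t) • (y : E), h⟩) =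
      t • StrongDual.toWeakDual (evalA K x) + (1 - t) • StrongDual.toWeakDual (evalA K y) :=
  DFunLike.ext _ _ fun a => a.2 x y t ht₀ ht₁ h

theorem convex_range_toWeakDual_evalA (hK : Convex ℝ K) :
    Convex ℝ (Set.range fun k : K => StrongDual.toWeakDual (evalA K k)) := by
  rintro _ ⟨x, rfl⟩ _ ⟨y, rfl⟩ s t hs ht hst
  obtain rfl : t = 1 - s := by linarith
  exact ⟨_, toWeakDual_evalA_convexComb K x y hs (by linarith) (hK x.2 y.2 hs ht hst)⟩

omit [CompactSpace K] in
def affineFnsOfDual [IsTopologicalAddGroup E] (g : StrongDual ℝ E) : affineFns K :=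
  ⟨⟨fun k => g k, by fun_prop⟩, fun x y t _ _ _ => by simp⟩

theorem toWeakDual_evalA_injective [IsTopologicalAddGroup E] [SeparatingDual ℝ E] :
    Function.Injective fun k : K => StrongDual.toWeakDual (evalA K k) := by
  intro x y hxy
  by_contra hne
  obtain ⟨g, hg⟩ := SeparatingDual.exists_separating_of_ne (R := ℝ) (Subtype.coe_injective.ne hne)
  exact hg (DFunLike.congr_fun hxy (affineFnsOfDual K g))

theorem range_toWeakDual_evalA (hK : Convex ℝ K) :
    Set.range (fun k : K => StrongDual.toWeakDual (evalA K k)) =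
      StrongDual.toWeakDual '' stateSpace K := by
  refine subset_antisymm ?_ ?_
  · rintro _ ⟨k, rfl⟩
    exact ⟨evalA K k, evalA_mem_stateSpace K k, rfl⟩
  rintro _ ⟨Λ, hΛ, rfl⟩
  by_contra hΛK
  have hclosed := (isCompact_range (continuous_toWeakDual_evalA K)).isClosed
  obtain ⟨f, u, hfK, hfΛ⟩ :=
    geometric_hahn_banach_closed_point (convex_range_toWeakDual_evalA K hK) hclosed hΛK
  obtain ⟨a, hfa⟩ := WeakDual.exists_eq_apply f
  have hau : Λ a ≤ u :=
    apply_le_of_forall_le (one_mem_affineFns K) (apply_le_norm_of_mem_stateSpace hΛ) hΛ.2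
      fun k => by
        have hk := (hfK _ ⟨k, rfl⟩).le
        rwa [hfa] at hk
  rw [hfa] at hfΛ
  exact hfΛ.not_ge hau

end Evaluation

theorem stmt_10 {E : Type*} [AddCommGroup E] [Module ℝ E] [TopologicalSpace E]
    [IsTopologicalAddGroup E] [ContinuousSMul ℝ E] [T2Space E] [LocallyConvexSpace ℝ E]
    (K : Set E) [CompactSpace K] (hK : Convex ℝ K)
    (S : Set (StrongDual ℝ (affineFns K)))
    (hS : S = {Λ : StrongDual ℝ (affineFns K) |
      @Norm.norm _ (@ContinuousLinearMap.hasOpNorm ℝ ℝ (affineFns K) ℝ _ _ _ _ _ _ (RingHom.id ℝ)) Λ ≤ 1 ∧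
      Λ ⟨(1 : C(K, ℝ)), one_mem_affineFns K⟩ = 1}) :
    ∃ φ : K ≃ₜ (StrongDual.toWeakDual '' S : Set (WeakDual ℝ (affineFns K))),
      (∀ k : K, (φ k : WeakDual ℝ (affineFns K)) = StrongDual.toWeakDual (evalA K k)) ∧
      -- the map is affine
      (∀ (x y : K) (t : ℝ), 0 ≤ t → t ≤ 1 →
        ∀ h : t • (x : E) + (1 - t) • (y : E) ∈ K,
          (φ ⟨t • (x : E) + (1 - t) • (y : E), h⟩ : WeakDual ℝ (affineFns K)) =
            t • (φ x : WeakDual ℝ (affineFns K)) +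
              (1 - t) • (φ y : WeakDual ℝ (affineFns K))) := by
  have hemb : Topology.IsClosedEmbedding fun k : K => StrongDual.toWeakDual (evalA K k) :=
    (continuous_toWeakDual_evalA K).isClosedEmbedding (toWeakDual_evalA_injective K)
  have hrange : Set.range (fun k : K => StrongDual.toWeakDual (evalA K k)) =
      StrongDual.toWeakDual '' S := by
    rw [hS]
    exact range_toWeakDual_evalA K hK
  exact ⟨hemb.isEmbedding.toHomeomorph.trans (Homeomorph.setCongr hrange), fun k => rfl,
    fun x y t ht₀ ht₁ h => toWeakDual_evalA_convexComb K x y ht₀ ht₁ h⟩
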